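/- arXiv:1912.00636 — 2 statements merged into one kernel-verified Lean document; each statement's English description precedes it below -/
import Mathlib

section
/- Let P be an irreducible stochastic matrix on a finite set S, f : S → ℝ, and suppose C := sup_{θ, x, y} v_θ(y)/v_θ(x) < ∞ where v_θ is the right Perron–Frobenius eigenvector of the tilted matrix P̃_θ. Then for the chain started at any fixed state and any μ ≥ μ(0) (the stationary mean of P composed with f): P(f(X₁)+⋯+f(X_n) ≥ nμ) ≤ C · exp(−n · sup_{η ≥ 0}(ημ − A(η))), where A(η) = log ρ(P̃_η) is the log-Perron–Frobenius eigenvalue. -/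
/-!
Chernoff's method: by Markov's inequality applied to `exp (η Sₙ)`, the probability is at most
`exp (-η n μ)` times the exponential moment `E exp (η Sₙ)`, and summing over trajectories
identifies this moment with `(P̃_η ^ n 1)(x₀)`. Comparing the all-ones vector with the positive
eigenvector `v_η` of the nonnegative matrix `P̃_η`, `1 ≤ (C / v_η x₀) v_η`, so this is at most
`C ρ(η) ^ n`. Optimising over `η ≥ 0` gives the bound.
-/

open MeasureTheory ProbabilityTheory Matrix

namespace Matrix

variable {S R : Type*} [Fintype S] [CommSemiring R]

theorem pow_mulVec_one_apply [DecidableEq S] (M : Matrix S S R) (n : ℕ) (x : S) :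
    (M ^ n *ᵥ 1) x =
      ∑ t : Fin n → S, ∏ i, M ((Fin.cons x t : Fin (n + 1) → S) i.castSucc) (t i) := by
  induction n generalizing x with
  | zero => simp
  | succ n ih =>
    rw [← (Fin.consEquiv fun _ ↦ S).sum_comp, Fintype.sum_prod_type, pow_succ', ← mulVec_mulVec,
      mulVec_apply_eq_sum]
    simp only [ih, Finset.mul_sum]
    refine Finset.sum_congr rfl fun y _ ↦ Finset.sum_congr rfl fun t _ ↦ ?_
    simp [Fin.prod_univ_succ, Fin.consEquiv]

variable [PartialOrder R] [IsOrderedRing R]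

theorem mulVec_le_mulVec_of_nonneg {M : Matrix S S R} (hM : ∀ i j, 0 ≤ M i j) {u w : S → R}
    (huw : u ≤ w) : M *ᵥ u ≤ M *ᵥ w := fun x ↦
  Finset.sum_le_sum fun y _ ↦ mul_le_mul_of_nonneg_left (huw y) (hM x y)

theorem pow_mulVec_one_le_of_mulVec_eq_smul [DecidableEq S] {M : Matrix S S R}
    (hM : ∀ i j, 0 ≤ M i j) {v : S → R} {ρ K : R} (hv : M *ᵥ v = ρ • v) (hK : 1 ≤ K • v)
    (n : ℕ) : M ^ n *ᵥ 1 ≤ (K * ρ ^ n) • v := by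
  induction n with
  | zero => simpa using hK
  | succ n ih =>
    calc M ^ (n + 1) *ᵥ 1 = M *ᵥ (M ^ n *ᵥ 1) := by rw [pow_succ', mulVec_mulVec]
      _ ≤ M *ᵥ ((K * ρ ^ n) • v) := mulVec_le_mulVec_of_nonneg hM ih
      _ = (K * ρ ^ (n + 1)) • v := by rw [mulVec_smul, hv, smul_smul]; ring_nf

end Matrix

section FiniteRange

variable {Ω T : Type*} [MeasurableSpace Ω] {μ : Measure Ω} [IsFiniteMeasure μ]
  [MeasurableSpace T] [MeasurableSingletonClass T] {Y : Ω → T}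

theorem integral_comp_eq_sum_measureReal [Fintype T] (hY : Measurable Y) (h : T → ℝ) :
    ∫ ω, h (Y ω) ∂μ = ∑ t, μ.real (Y ⁻¹' {t}) * h t := by
  rw [← integral_map hY.aemeasurable Measurable.of_discrete.aestronglyMeasurable,
    integral_fintype .of_finite]
  simp [map_measureReal_apply hY (measurableSet_singleton _)]

theorem integrable_comp_of_finite [Finite T] (hY : Measurable Y) (h : T → ℝ) :
    Integrable (fun ω ↦ h (Y ω)) μ :=
  Integrable.of_finite.comp_measurable hY

end FiniteRange

section MarkovChain

variable {S Ω : Type*} {X : ℕ → Ω → S}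

def trajectory (X : ℕ → Ω → S) (n : ℕ) (ω : Ω) : Fin (n + 1) → S := fun i ↦ X i ω

theorem sum_range_eq_sum_trajectory (f : S → ℝ) (n : ℕ) (ω : Ω) :
    ∑ i ∈ Finset.range n, f (X (i + 1) ω) = ∑ i : Fin n, f (trajectory X n ω i.succ) :=
  (Fin.sum_univ_eq_sum_range (fun i ↦ f (X (i + 1) ω)) n).symm

variable [MeasurableSpace Ω] {μ : Measure Ω}

theorem measurable_trajectory [MeasurableSpace S] (hX : ∀ i, Measurable (X i)) (n : ℕ) :
    Measurable (trajectory X n) :=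
  measurable_pi_lambda _ fun i ↦ hX i

theorem measureReal_trajectory_preimage_singleton [DecidableEq S] {P : S → S → ℝ} {x₀ : S}
    {n : ℕ} (hMC : ∀ path : ℕ → S, μ.real {ω | ∀ i ≤ n, X i ω = path i}
        = (if path 0 = x₀ then (1 : ℝ) else 0) * ∏ i ∈ Finset.range n, P (path i) (path (i + 1)))
    (q : Fin (n + 1) → S) :
    μ.real (trajectory X n ⁻¹' {q}) =
      (if q 0 = x₀ then (1 : ℝ) else 0) * ∏ i : Fin n, P (q i.castSucc) (q i.succ) := by
  have hcyl : trajectory X n ⁻¹' {q} = {ω | ∀ i ≤ n, X i ω = q (Fin.ofNat (n + 1) i)} := by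
    ext ω
    simp only [Set.mem_preimage, Set.mem_singleton_iff, funext_iff, trajectory, Set.mem_ofPred_eq]
    constructor
    · intro h i hi
      simpa [Nat.mod_eq_of_lt (Nat.lt_succ_of_le hi)] using h (Fin.ofNat (n + 1) i)
    · intro h i
      simpa using h i i.is_le
  have hcast (i : Fin n) : Fin.ofNat (n + 1) i = i.castSucc :=
    Fin.ext (Nat.mod_eq_of_lt (Nat.lt_succ_of_lt i.is_lt))
  have hsucc (i : Fin n) : Fin.ofNat (n + 1) (i + 1) = i.succ :=
    Fin.ext (Nat.mod_eq_of_lt (Nat.succ_lt_succ i.is_lt))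
  rw [hcyl, hMC, ← Fin.prod_univ_eq_prod_range]
  simp only [hcast, hsucc, Fin.ofNat_zero]

variable [Fintype S] [MeasurableSpace S] [MeasurableSingletonClass S] [IsFiniteMeasure μ]

theorem integrable_exp_mul_sum_range (hX : ∀ i, Measurable (X i)) (f : S → ℝ) (t : ℝ) (n : ℕ) :
    Integrable (fun ω ↦ Real.exp (t * ∑ i ∈ Finset.range n, f (X (i + 1) ω))) μ := by
  simp only [sum_range_eq_sum_trajectory]
  exact integrable_comp_of_finite (measurable_trajectory hX n)
    fun q ↦ Real.exp (t * ∑ i : Fin n, f (q i.succ))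

theorem mgf_sum_range_eq_pow_mulVec_one [DecidableEq S] (hX : ∀ i, Measurable (X i))
    {P : S → S → ℝ} {x₀ : S} {n : ℕ}
    (hMC : ∀ path : ℕ → S, μ.real {ω | ∀ i ≤ n, X i ω = path i}
        = (if path 0 = x₀ then (1 : ℝ) else 0) * ∏ i ∈ Finset.range n, P (path i) (path (i + 1)))
    (f : S → ℝ) (η : ℝ) :
    mgf (fun ω ↦ ∑ i ∈ Finset.range n, f (X (i + 1) ω)) μ η
      = ((Matrix.of fun x y ↦ P x y * Real.exp (η * f y)) ^ n *ᵥ 1) x₀ := by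
  simp only [mgf, sum_range_eq_sum_trajectory]
  rw [integral_comp_eq_sum_measureReal (measurable_trajectory hX n)
    fun q ↦ Real.exp (η * ∑ i : Fin n, f (q i.succ))]
  simp only [measureReal_trajectory_preimage_singleton hMC, pow_mulVec_one_apply]
  rw [← (Fin.consEquiv fun _ ↦ S).sum_comp, Fintype.sum_prod_type]
  simp [Fin.consEquiv, Finset.mul_sum, Real.exp_sum, Finset.prod_mul_distrib]

end MarkovChain

theorem le_mul_exp_neg_mul_iSup {ι : Type*} [Nonempty ι] {a C t : ℝ} {g : ι → ℝ} (ha : 0 ≤ a)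
    (ht : 0 ≤ t) (h : ∀ i, a ≤ C * Real.exp (-t * g i)) :
    a ≤ C * Real.exp (-t * ⨆ i, g i) := by
  obtain ⟨i₀⟩ := ‹Nonempty ι›
  rcases ha.eq_or_lt with rfl | ha
  · have hC : 0 ≤ C := nonneg_of_mul_nonneg_left (h i₀) (Real.exp_pos _)
    positivity
  rcases ht.eq_or_lt with rfl | ht
  · simpa using h i₀
  have hC : 0 < C := pos_of_mul_pos_left (ha.trans_le (h i₀)) (Real.exp_pos _).le
  -- `a ≤ C exp (-t s)` is equivalent to `s ≤ (log C - log a) / t`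
  have hg : ⨆ i, g i ≤ (Real.log C - Real.log a) / t := ciSup_le fun i ↦ by
    have hlog := Real.log_le_log ha (h i)
    rw [Real.log_mul hC.ne' (Real.exp_pos _).ne', Real.log_exp] at hlog
    rw [le_div_iff₀ ht]
    linarith
  calc a = C * Real.exp (-t * ((Real.log C - Real.log a) / t)) := by
        rw [neg_mul, mul_div_cancel₀ _ ht.ne', neg_sub, Real.exp_sub, Real.exp_log ha,
          Real.exp_log hC]
        field_simp
    _ ≤ C * Real.exp (-t * ⨆ i, g i) := by
        gcongr C * Real.exp ?_
        exact mul_le_mul_of_nonpos_left hg (neg_nonpos.2 ht.le)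

theorem stmt_8_general
    {S : Type*} [Fintype S] [DecidableEq S] [MeasurableSpace S] [MeasurableSingletonClass S]
    {Ω : Type*} [MeasurableSpace Ω] (μ : Measure Ω) [IsProbabilityMeasure μ]
    (X : ℕ → Ω → S) (hX : ∀ i, Measurable (X i))
    (P : S → S → ℝ) (f : S → ℝ) (x₀ : S)
    (hP0 : ∀ x y, 0 ≤ P x y)
    (hMC : ∀ (n : ℕ) (path : ℕ → S),
      (μ {ω | ∀ i ≤ n, X i ω = path i}).toReal
        = (if path 0 = x₀ then (1 : ℝ) else 0)
            * ∏ i ∈ Finset.range n, P (path i) (path (i + 1)))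
    (ρ : ℝ → ℝ) (v : ℝ → S → ℝ)
    (hρ : ∀ θ, 0 < ρ θ) (hv : ∀ θ x, 0 < v θ x)
    (heig : ∀ θ x, ∑ y, P x y * Real.exp (θ * f y) * v θ y = ρ θ * v θ x)
    (C : ℝ) (hC : ∀ (θ : ℝ) (x y : S), v θ y ≤ C * v θ x)
    (μval : ℝ) (n : ℕ) :
    (μ {ω | (n : ℝ) * μval ≤ ∑ i ∈ Finset.range n, f (X (i + 1) ω)}).toReal
      ≤ C * Real.exp (-(n : ℝ) *
          ⨆ η : Set.Ici (0 : ℝ), ((η : ℝ) * μval - Real.log (ρ η))) := by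
  refine le_mul_exp_neg_mul_iSup measureReal_nonneg n.cast_nonneg fun ⟨η, hη⟩ ↦ ?_
  set M := Matrix.of fun x y ↦ P x y * Real.exp (η * f y)
  have hM : M *ᵥ v η = ρ η • v η := funext (heig η)
  have hK : 1 ≤ (C / v η x₀) • v η := fun y ↦ by
    simpa [div_mul_eq_mul_div, le_div_iff₀ (hv η x₀)] using hC η y x₀
  have hpow := pow_mulVec_one_le_of_mulVec_eq_smul
    (fun x y ↦ mul_nonneg (hP0 x y) (Real.exp_pos _).le) hM hK n x₀
  calc μ.real {ω | (n : ℝ) * μval ≤ ∑ i ∈ Finset.range n, f (X (i + 1) ω)}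
      ≤ Real.exp (-η * (n * μval)) * (M ^ n *ᵥ 1) x₀ := by
        rw [← mgf_sum_range_eq_pow_mulVec_one hX (hMC n)]
        exact measure_ge_le_exp_mul_mgf _ hη (integrable_exp_mul_sum_range hX f η n)
    _ ≤ Real.exp (-η * (n * μval)) * (C / v η x₀ * ρ η ^ n * v η x₀) := by gcongr; exact hpow
    _ = C * Real.exp (-n * (η * μval - Real.log (ρ η))) := by
        have hρn : ρ η ^ n = Real.exp (n * Real.log (ρ η)) := by
          rw [Real.exp_nat_mul, Real.exp_log (hρ η)]
        rw [div_mul_eq_mul_div, div_mul_cancel₀ _ (hv η x₀).ne', hρn, mul_left_comm,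
          ← Real.exp_add]
        ring_nf

/-- Chernoff-type concentration bound for an irreducible finite Markov chain
started at a fixed state: for any `μval ≥ μ(0)` (the stationary mean),
`P(f(X₁)+⋯+f(X_n) ≥ n μval) ≤ C * exp (−n * sup_{η ≥ 0} (η μval − A η))`,
where `A η = log ρ(P̃_η)` and `C` bounds the ratios of entries of the right
Perron–Frobenius eigenvectors of the tilted matrices. -/
theorem stmt_8
    {S : Type*} [Fintype S] [DecidableEq S] [MeasurableSpace S] [MeasurableSingletonClass S]
    {Ω : Type*} [MeasurableSpace Ω] (μ : Measure Ω) [IsProbabilityMeasure μ]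
    (X : ℕ → Ω → S) (hX : ∀ i, Measurable (X i))
    (P : S → S → ℝ) (f : S → ℝ) (x₀ : S)
    (hP0 : ∀ x y, 0 ≤ P x y) (hP1 : ∀ x, ∑ y, P x y = 1)
    (hirr : ∀ x y : S, ∃ n : ℕ, 0 < ((Matrix.of P) ^ n) x y)
    (hMC : ∀ (n : ℕ) (path : ℕ → S),
      (μ {ω | ∀ i ≤ n, X i ω = path i}).toReal
        = (if path 0 = x₀ then (1 : ℝ) else 0)
            * ∏ i ∈ Finset.range n, P (path i) (path (i + 1)))
    (ρ : ℝ → ℝ) (v : ℝ → S → ℝ)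
    (hρ : ∀ θ, 0 < ρ θ) (hv : ∀ θ x, 0 < v θ x)
    (heig : ∀ θ x, ∑ y, P x y * Real.exp (θ * f y) * v θ y = ρ θ * v θ x)
    (C : ℝ) (hC : ∀ (θ : ℝ) (x y : S), v θ y ≤ C * v θ x)
    (pi : S → ℝ)
    (hpi0 : ∀ x, 0 ≤ pi x) (hpi1 : ∑ x, pi x = 1)
    (hpistat : ∀ y, ∑ x, pi x * P x y = pi y)
    (μval : ℝ) (hμval : (∑ x, pi x * f x) ≤ μval) (n : ℕ) :
    (μ {ω | (n : ℝ) * μval ≤ ∑ i ∈ Finset.range n, f (X (i + 1) ω)}).toReal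
      ≤ C * Real.exp (-(n : ℝ) *
          ⨆ η : Set.Ici (0 : ℝ), ((η : ℝ) * μval - Real.log (ρ η))) :=
  stmt_8_general μ X hX P f x₀ hP0 hMC ρ v hρ hv heig C hC μval n
end

section
/- Let P be an irreducible stochastic matrix on finite S with all entries of the tilted family well-defined, and suppose C(P, f) := sup_{θ, x, y} v_{P̃_θ}(y)/v_{P̃_θ}(x) < ∞; here v_{P̃_θ} is the positive right Perron–Frobenius eigenvector of P̃_θ(x,y) = P(x,y)e^{θf(y)}. For θ₂ ∈ ℝ let P_{θ₂} denote the corresponding Doob-transformed stochastic matrix. Then the right Perron–Frobenius eigenvector of the tilt of P_{θ₂} by θ₁ satisfies v_{(P_{θ₂})~_{θ₁}}(y)/v_{(P_{θ₂})~_{θ₁}}(x) = (v_{P̃_{θ₁+θ₂}}(y) v_{P̃_{θ₂}}(x)) / (v_{P̃_{θ₁+θ₂}}(x) v_{P̃_{θ₂}}(y)), and consequently sup_{θ₂} C(P_{θ₂}, f) ≤ C(P, f)². -/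
/-!
Write `P̃_θ` for the tilt of `P` by `θ f` and `h = v_{P̃_{θ₂}}`. Tilting the Doob transform
`P_{θ₂} = (ρ h)⁻¹ P̃_{θ₂} h` by `θ₁` gives `(ρ h)⁻¹ P̃_{θ₁+θ₂} h`, so `h · w` is a positive
eigenvector of `P̃_{θ₁+θ₂}` whenever `w` is one of the tilted Doob transform. Positive
eigenvectors `u`, `v` of an irreducible nonnegative matrix are proportional: with
`t = min u/v`, evaluating at a minimiser shows that the eigenvalues agree, and then `u - t v` is a
nonnegative eigenvector vanishing somewhere, hence everywhere by irreducibility. This gives the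
ratio identity, and the bound `C²` follows by splitting the ratio into two ratios of `v`.
-/

open Finset Matrix

namespace Matrix

variable {n : Type*} [Fintype n] [DecidableEq n]

theorem pow_apply_pos_of_pos_imp_pos {A B : Matrix n n ℝ} (hA : ∀ i j, 0 ≤ A i j)
    (hB : ∀ i j, 0 ≤ B i j) (hAB : ∀ i j, 0 < A i j → 0 < B i j) (k : ℕ) (i j : n)
    (h : 0 < (A ^ k) i j) : 0 < (B ^ k) i j := by
  induction k generalizing j with
  | zero => simpa using h
  | succ k ih =>
    rw [pow_succ, mul_apply] at h ⊢
    obtain ⟨l, -, hl⟩ := (sum_pos_iff_of_nonneg fun l _ ↦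
      mul_nonneg (pow_apply_nonneg hA k i l) (hA l j)).1 h
    have hAk : 0 < (A ^ k) i l := pos_of_mul_pos_left hl (hA l j)
    have hAl : 0 < A l j := pos_of_mul_pos_right hl (pow_apply_nonneg hA k i l)
    exact (sum_pos_iff_of_nonneg fun l _ ↦
      mul_nonneg (pow_apply_nonneg hB k i l) (hB l j)).2
      ⟨l, mem_univ l, mul_pos (ih l hAk) (hAB l j hAl)⟩

theorem pow_mulVec_of_mulVec_eq_smul {A : Matrix n n ℝ} {d : n → ℝ} {l : ℝ}
    (hAd : A *ᵥ d = l • d) (k : ℕ) : (A ^ k) *ᵥ d = l ^ k • d := by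
  induction k with
  | zero => simp
  | succ k ih =>
    rw [pow_succ, ← mulVec_mulVec, hAd, mulVec_smul, ih, smul_smul, pow_succ']

omit [DecidableEq n] in
theorem exists_max_smul_le [Nonempty n] (u v : n → ℝ) (hv : ∀ i, 0 < v i) :
    ∃ t i₀, (∀ i, t * v i ≤ u i) ∧ t * v i₀ = u i₀ := by
  obtain ⟨i₀, -, hmin⟩ := exists_min_image univ (fun i ↦ u i / v i) univ_nonempty
  refine ⟨u i₀ / v i₀, i₀, fun i ↦ ?_, div_mul_cancel₀ _ (hv i₀).ne'⟩
  exact (le_div_iff₀ (hv i)).1 (hmin i (mem_univ i))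

omit [DecidableEq n] in
theorem le_of_mulVec_eq_smul_of_pos [Nonempty n] {A : Matrix n n ℝ} (hA : ∀ i j, 0 ≤ A i j)
    {u v : n → ℝ} {l m : ℝ} (hu : ∀ i, 0 < u i) (hv : ∀ i, 0 < v i)
    (hAu : A *ᵥ u = l • u) (hAv : A *ᵥ v = m • v) : m ≤ l := by
  obtain ⟨t, i₀, ht, ht₀⟩ := exists_max_smul_le u v hv
  have key : t * (A *ᵥ v) i₀ ≤ (A *ᵥ u) i₀ := by
    simp only [mulVec, dotProduct, mul_sum]
    exact sum_le_sum fun j _ ↦ by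
      rw [mul_left_comm]; exact mul_le_mul_of_nonneg_left (ht j) (hA i₀ j)
  rw [hAu, hAv, Pi.smul_apply, Pi.smul_apply, smul_eq_mul, smul_eq_mul, mul_left_comm,
    ht₀] at key
  exact le_of_mul_le_mul_right key (hu i₀)

theorem eq_zero_of_nonneg_of_mulVec_eq_smul {A : Matrix n n ℝ} (hA : ∀ i j, 0 ≤ A i j)
    (hirr : ∀ i j, ∃ k : ℕ, 0 < (A ^ k) i j) {d : n → ℝ} {l : ℝ} (hd : ∀ i, 0 ≤ d i)
    (hAd : A *ᵥ d = l • d) {i₀ : n} (hi₀ : d i₀ = 0) : d = 0 := by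
  funext j
  obtain ⟨k, hk⟩ := hirr i₀ j
  have hsum : ∑ j', (A ^ k) i₀ j' * d j' = 0 := by
    simpa [hi₀, mulVec, dotProduct] using congr_fun (pow_mulVec_of_mulVec_eq_smul hAd k) i₀
  have hj := (sum_eq_zero_iff_of_nonneg fun j' _ ↦
    mul_nonneg (pow_apply_nonneg hA k i₀ j') (hd j')).1 hsum j (mem_univ j)
  exact (mul_eq_zero.1 hj).resolve_left hk.ne'

theorem exists_eq_smul_of_pos_eigenvectors {A : Matrix n n ℝ} (hA : ∀ i j, 0 ≤ A i j)
    (hirr : ∀ i j, ∃ k : ℕ, 0 < (A ^ k) i j) {u v : n → ℝ} {l m : ℝ}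
    (hu : ∀ i, 0 < u i) (hv : ∀ i, 0 < v i) (hAu : A *ᵥ u = l • u) (hAv : A *ᵥ v = m • v) :
    ∃ c : ℝ, u = c • v := by
  cases isEmpty_or_nonempty n
  · exact ⟨0, Subsingleton.elim _ _⟩
  obtain rfl : l = m := le_antisymm (le_of_mulVec_eq_smul_of_pos hA hv hu hAv hAu)
    (le_of_mulVec_eq_smul_of_pos hA hu hv hAu hAv)
  obtain ⟨t, i₀, ht, ht₀⟩ := exists_max_smul_le u v hv
  have hAd : A *ᵥ (u - t • v) = l • (u - t • v) := by
    rw [mulVec_sub, mulVec_smul, hAu, hAv, smul_sub, smul_comm l t]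
  have hd := eq_zero_of_nonneg_of_mulVec_eq_smul hA hirr (d := u - t • v)
    (fun i ↦ sub_nonneg.2 (ht i)) hAd (i₀ := i₀) (by simp [ht₀])
  exact ⟨t, sub_eq_zero.1 hd⟩

end Matrix

section Tilt

variable {S : Type*} [Fintype S]

noncomputable def tilt (P : Matrix S S ℝ) (f : S → ℝ) (θ : ℝ) : Matrix S S ℝ :=
  of fun x y ↦ P x y * Real.exp (θ * f y)

noncomputable def doobTransform (A : Matrix S S ℝ) (h : S → ℝ) (ρ : ℝ) : Matrix S S ℝ :=
  of fun x y ↦ A x y * h y / (ρ * h x)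

omit [Fintype S] in
theorem tilt_nonneg {P : Matrix S S ℝ} (hP : ∀ x y, 0 ≤ P x y) (f : S → ℝ) (θ : ℝ) (x y : S) :
    0 ≤ tilt P f θ x y :=
  mul_nonneg (hP x y) (Real.exp_pos _).le

theorem tilt_pow_apply_pos [DecidableEq S] {P : Matrix S S ℝ} (hP : ∀ x y, 0 ≤ P x y)
    (f : S → ℝ) (θ : ℝ) {k : ℕ} {x y : S} (h : 0 < (P ^ k) x y) :
    0 < (tilt P f θ ^ k) x y :=
  pow_apply_pos_of_pos_imp_pos hP (tilt_nonneg hP f θ)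
    (fun _ _ hxy ↦ mul_pos hxy (Real.exp_pos _)) k x y h

omit [Fintype S] in
theorem tilt_doobTransform_tilt (P : Matrix S S ℝ) (f h : S → ℝ) (ρ θ₁ θ₂ : ℝ) :
    tilt (doobTransform (tilt P f θ₂) h ρ) f θ₁ = doobTransform (tilt P f (θ₁ + θ₂)) h ρ := by
  ext x y
  simp only [tilt, doobTransform, of_apply, add_mul, Real.exp_add]
  ring

theorem doobTransform_mulVec_eq_smul_iff (A : Matrix S S ℝ) {h : S → ℝ} {ρ : ℝ}
    (hh : ∀ x, h x ≠ 0) (hρ : ρ ≠ 0) (w : S → ℝ) (σ : ℝ) :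
    doobTransform A h ρ *ᵥ w = σ • w ↔ A *ᵥ (h * w) = (ρ * σ) • (h * w) := by
  simp only [funext_iff, mulVec, dotProduct, doobTransform, of_apply, Pi.smul_apply,
    Pi.mul_apply, smul_eq_mul]
  refine forall_congr' fun x ↦ ?_
  have hx : ρ * h x ≠ 0 := mul_ne_zero hρ (hh x)
  rw [show ∑ y, A x y * h y / (ρ * h x) * w y = (∑ y, A x y * (h y * w y)) / (ρ * h x) by
    rw [sum_div]; exact sum_congr rfl fun y _ ↦ by ring, div_eq_iff hx]
  constructor <;> intro hsum <;> linear_combination hsum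

end Tilt

theorem stmt_19_general
    {S : Type*} [Fintype S] [DecidableEq S]
    (P : S → S → ℝ) (f : S → ℝ)
    (hP0 : ∀ x y, 0 ≤ P x y)
    (hirr : ∀ x y : S, ∃ n : ℕ, 0 < ((Matrix.of P) ^ n) x y)
    (ρ : ℝ → ℝ) (v : ℝ → S → ℝ)
    (hρ : ∀ θ, 0 < ρ θ) (hv : ∀ θ x, 0 < v θ x)
    (heig : ∀ θ x, ∑ y, P x y * Real.exp (θ * f y) * v θ y = ρ θ * v θ x)
    -- `w θ₁ θ₂` is the positive right Perron–Frobenius eigenvector (with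
    -- eigenvalue `σ θ₁ θ₂`) of the tilt by `θ₁` of the Doob transform `P_{θ₂}`
    (σ : ℝ → ℝ → ℝ) (w : ℝ → ℝ → S → ℝ)
    (hw : ∀ θ₁ θ₂ x, 0 < w θ₁ θ₂ x)
    (heig2 : ∀ θ₁ θ₂ x,
      ∑ y, (P x y * Real.exp (θ₂ * f y) * v θ₂ y / (ρ θ₂ * v θ₂ x))
          * Real.exp (θ₁ * f y) * w θ₁ θ₂ y
        = σ θ₁ θ₂ * w θ₁ θ₂ x)
    (C : ℝ) (hC : ∀ (θ : ℝ) (x y : S), v θ y / v θ x ≤ C) :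
    (∀ (θ₁ θ₂ : ℝ) (x y : S),
      w θ₁ θ₂ y / w θ₁ θ₂ x
        = v (θ₁ + θ₂) y * v θ₂ x / (v (θ₁ + θ₂) x * v θ₂ y)) ∧
    (∀ (θ₁ θ₂ : ℝ) (x y : S), w θ₁ θ₂ y / w θ₁ θ₂ x ≤ C ^ 2) := by
  have ratio (θ₁ θ₂ : ℝ) (x y : S) : w θ₁ θ₂ y / w θ₁ θ₂ x
      = v (θ₁ + θ₂) y * v θ₂ x / (v (θ₁ + θ₂) x * v θ₂ y) := by
    have hprod : tilt (of P) f (θ₁ + θ₂) *ᵥ (v θ₂ * w θ₁ θ₂)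
        = (ρ θ₂ * σ θ₁ θ₂) • (v θ₂ * w θ₁ θ₂) := by
      rw [← doobTransform_mulVec_eq_smul_iff _ (fun x ↦ (hv θ₂ x).ne') (hρ θ₂).ne',
        ← tilt_doobTransform_tilt]
      exact funext (heig2 θ₁ θ₂)
    obtain ⟨c, hc⟩ := exists_eq_smul_of_pos_eigenvectors (tilt_nonneg hP0 f _)
      (fun x y ↦ (hirr x y).imp fun _ ↦ tilt_pow_apply_pos hP0 f _)
      (fun z ↦ mul_pos (hv θ₂ z) (hw θ₁ θ₂ z)) (hv (θ₁ + θ₂)) hprod (funext (heig _))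
    have hx : v θ₂ x * w θ₁ θ₂ x = c * v (θ₁ + θ₂) x := congr_fun hc x
    have hy : v θ₂ y * w θ₁ θ₂ y = c * v (θ₁ + θ₂) y := congr_fun hc y
    rw [div_eq_div_iff (hw θ₁ θ₂ x).ne' (mul_pos (hv _ x) (hv θ₂ y)).ne']
    linear_combination v (θ₁ + θ₂) x * hy - v (θ₁ + θ₂) y * hx
  refine ⟨ratio, fun θ₁ θ₂ x y ↦ ?_⟩
  have hC0 : 0 ≤ C := (div_pos (hv 0 y) (hv 0 x)).le.trans (hC 0 x y)
  calc w θ₁ θ₂ y / w θ₁ θ₂ x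
      = v (θ₁ + θ₂) y / v (θ₁ + θ₂) x * (v θ₂ x / v θ₂ y) := by
        rw [ratio, div_mul_div_comm]
    _ ≤ C * C := mul_le_mul (hC _ x y) (hC θ₂ y x) (div_pos (hv θ₂ x) (hv θ₂ y)).le hC0
    _ = C ^ 2 := (sq C).symm

/-- Tilting the Doob transform `P_{θ₂}` by `θ₁` yields right Perron–Frobenius
eigenvector ratios
`w θ₁ θ₂ y / w θ₁ θ₂ x = v (θ₁+θ₂) y * v θ₂ x / (v (θ₁+θ₂) x * v θ₂ y)`, and
consequently if `C` bounds all ratios `v θ y / v θ x`, then the eigenvector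
ratios for the tilted Doob transforms are bounded by `C ^ 2`. -/
theorem stmt_19
    {S : Type*} [Fintype S] [DecidableEq S]
    (P : S → S → ℝ) (f : S → ℝ)
    (hP0 : ∀ x y, 0 ≤ P x y) (hP1 : ∀ x, ∑ y, P x y = 1)
    (hirr : ∀ x y : S, ∃ n : ℕ, 0 < ((Matrix.of P) ^ n) x y)
    (ρ : ℝ → ℝ) (v : ℝ → S → ℝ)
    (hρ : ∀ θ, 0 < ρ θ) (hv : ∀ θ x, 0 < v θ x)
    (heig : ∀ θ x, ∑ y, P x y * Real.exp (θ * f y) * v θ y = ρ θ * v θ x)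
    -- `w θ₁ θ₂` is the positive right Perron–Frobenius eigenvector (with
    -- eigenvalue `σ θ₁ θ₂`) of the tilt by `θ₁` of the Doob transform `P_{θ₂}`
    (σ : ℝ → ℝ → ℝ) (w : ℝ → ℝ → S → ℝ)
    (hσ : ∀ θ₁ θ₂, 0 < σ θ₁ θ₂) (hw : ∀ θ₁ θ₂ x, 0 < w θ₁ θ₂ x)
    (heig2 : ∀ θ₁ θ₂ x,
      ∑ y, (P x y * Real.exp (θ₂ * f y) * v θ₂ y / (ρ θ₂ * v θ₂ x))
          * Real.exp (θ₁ * f y) * w θ₁ θ₂ y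
        = σ θ₁ θ₂ * w θ₁ θ₂ x)
    (C : ℝ) (hC : ∀ (θ : ℝ) (x y : S), v θ y / v θ x ≤ C) :
    (∀ (θ₁ θ₂ : ℝ) (x y : S),
      w θ₁ θ₂ y / w θ₁ θ₂ x
        = v (θ₁ + θ₂) y * v θ₂ x / (v (θ₁ + θ₂) x * v θ₂ y)) ∧
    (∀ (θ₁ θ₂ : ℝ) (x y : S), w θ₁ θ₂ y / w θ₁ θ₂ x ≤ C ^ 2) :=
  stmt_19_general P f hP0 hirr ρ v hρ hv heig σ w hw heig2 C hC
end
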